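/- Let α > 1 be odd and β an integer with 0 < β < α and gcd(α,β) = 1. Let S be the set of all finite integer sequences [n_1, …, n_k] with |n_i| ≥ 2 for all i whose continued fraction value equals β/α or (β−α)/α. Then S is finite and Σ_{n∈S} ∏_{j=1}^{k}(|n_j| − 1) = α. Equivalently, the total Culler–Shalen seminorm of the meridian satisfies Φ(1,0) = (α−1)/2, which is the L-degree of the Â-polynomial of the two-bridge knot K(α,β). -/

import Mathlib

/-!
Let `W x` be the total weight of the expansions of `x`. As `|cf L| < 1` whenever all entries of `L`
have absolute value at least `2`, an expansion of `x ≠ 0` is `n :: L` with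
`n ∈ {⌊x⁻¹⌋, ⌊x⁻¹⌋ + 1}` and `L` an expansion of `x⁻¹ - n`. For `x = (q + f)⁻¹` with `q ≥ 1` and
`0 ≤ f < 1` this gives `W x = (q - 1) W f + q W (f - 1)`; together with `W (-x) = W x` it also
gives `W (x - 1) = W f + (W g + W (g - 1))` for `f > 0`, where `g = fract f⁻¹`. So
`W x + W (x - 1)` obeys the recursion `den x = q · den f + num f`, `num f = den g` of the
Euclidean algorithm, and equals `den x` on `[0, 1)` by induction on the denominator.
-/
noncomputable section

/-- The continued fraction value `cf [n_1, …, n_k] = 1/(n_1 + 1/(n_2 + ⋯ + 1/n_k))`. -/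
def cf : List ℤ → ℚ
  | [] => 0
  | n :: L => 1 / ((n : ℚ) + cf L)

/-- `n⁺`: the number of (0-based) indices `j` with `sign(n_j) = (−1)^j`
(1-based: `sign(n_i) = (−1)^{i−1}`). -/
def nplus (L : List ℤ) : ℕ :=
  ((Finset.range L.length).filter (fun j => (L.getD j 0).sign = (-1) ^ j)).card

/-- `s(n) = n⁺ − n⁻` where `n⁻ = k − n⁺`. -/
def sval (L : List ℤ) : ℤ := 2 * (nplus L : ℤ) - L.length

/-- The set `S` of all finite integer sequences with all entries of absolute value at
least `2` whose continued fraction value is `β/α` or `(β−α)/α`. -/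
def Sset (α β : ℤ) : Set (List ℤ) :=
  {L | (∀ n ∈ L, 2 ≤ |n|) ∧
    (cf L = (β : ℚ) / (α : ℚ) ∨ cf L = ((β : ℚ) - (α : ℚ)) / (α : ℚ))}

/-- The weight `∏_{j=1}^{k} (|n_j| − 1)` of an expansion. -/
def weightProd (L : List ℤ) : ℤ := (L.map (fun n => |n| - 1)).prod

/-- The total Culler–Shalen seminorm
`Φ(p,q) = (1/2)(−|p| + Σ_{n∈S} |p − N_n·q|·∏_j (|n_j| − 1))`, where
`N_n = 2(s(n) − s(n₀))` and `n₀` is the all-even expansion in `S`. -/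
def totalSeminorm (α β : ℤ) (n₀ : List ℤ) (p q : ℤ) : ℚ :=
  (1 / 2) * (-(|(p : ℚ)|) +
    ∑ᶠ L ∈ Sset α β, ((|p - 2 * (sval L - sval n₀) * q| * weightProd L : ℤ) : ℚ))

def expansions (x : ℚ) : Set (List ℤ) := {L | (∀ n ∈ L, 2 ≤ |n|) ∧ cf L = x}

def weightSum (x : ℚ) : ℤ := ∑ᶠ L ∈ expansions x, weightProd L

theorem abs_cf_lt_one : ∀ {L : List ℤ}, (∀ n ∈ L, 2 ≤ |n|) → |cf L| < 1
  | [], _ => by simp [cf]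
  | n :: L, h => by
    have hL : |cf L| < 1 := abs_cf_lt_one fun m hm => h m (List.mem_cons_of_mem _ hm)
    have hn : (2 : ℚ) ≤ |(n : ℚ)| := by exact_mod_cast h n List.mem_cons_self
    have hden : 1 < |(n : ℚ) + cf L| := by
      have := abs_sub_abs_le_abs_sub (n : ℚ) (-cf L)
      rw [abs_neg, sub_neg_eq_add] at this
      linarith
    rw [cf, one_div, abs_inv]
    exact inv_lt_one_of_one_lt₀ hden

theorem cf_map_neg : ∀ L : List ℤ, cf (L.map Neg.neg) = -cf L
  | [] => by simp [cf]
  | n :: L => by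
    rw [List.map_cons, cf, cf, cf_map_neg L, Int.cast_neg, ← neg_add, one_div_neg_eq_neg_one_div]

theorem cons_mem_expansions_iff {x : ℚ} {n : ℤ} {L : List ℤ} :
    n :: L ∈ expansions x ↔ 2 ≤ |n| ∧ L ∈ expansions (x⁻¹ - n) := by
  simp only [expansions, Set.mem_ofPred_eq, List.forall_mem_cons, cf, and_assoc]
  refine and_congr_right fun _ => and_congr_right fun _ => ⟨fun hx => ?_, fun hL => ?_⟩
  · rw [← hx, one_div, inv_inv, add_sub_cancel_left]
  · rw [hL, add_sub_cancel, one_div, inv_inv]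

theorem expansions_zero : expansions 0 = {[]} := by
  ext (_ | ⟨n, L⟩)
  · simp [expansions, cf]
  · simp only [Set.mem_singleton_iff, reduceCtorEq, iff_false, cons_mem_expansions_iff,
      inv_zero, zero_sub]
    rintro ⟨hn, hL, hcf⟩
    have h := abs_cf_lt_one hL
    rw [hcf, abs_neg] at h
    have : (2 : ℚ) ≤ |(n : ℚ)| := by exact_mod_cast hn
    linarith

theorem expansions_eq_empty {x : ℚ} (hx : 1 ≤ |x|) : expansions x = ∅ :=
  Set.eq_empty_of_forall_notMem fun _ ⟨hL, hcf⟩ => (hcf ▸ abs_cf_lt_one hL).not_ge hx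

theorem expansions_neg (x : ℚ) : expansions (-x) = List.map Neg.neg '' expansions x := by
  have hmem : ∀ {L : List ℤ} {x : ℚ}, L ∈ expansions x → L.map Neg.neg ∈ expansions (-x) :=
    fun ⟨hL, hcf⟩ => ⟨List.forall_mem_map.mpr fun m hm => (abs_neg m).symm ▸ hL m hm,
      by rw [cf_map_neg, hcf]⟩
  refine Set.Subset.antisymm (fun L hL => ⟨L.map Neg.neg, ?_, by simp⟩) ?_
  · simpa using hmem hL
  · rintro _ ⟨L, hL, rfl⟩
    exact hmem hL

theorem disjoint_expansions {x y : ℚ} (h : x ≠ y) : Disjoint (expansions x) (expansions y) :=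
  Set.disjoint_left.mpr fun _ hx hy => h (hx.2.symm.trans hy.2)

theorem eq_floor_or_eq_floor_add_one_of_abs_sub_lt_one {R : Type*} [CommRing R] [LinearOrder R]
    [IsStrictOrderedRing R] [FloorRing R] {y : R} {n : ℤ} (h : |y - n| < 1) :
    n = ⌊y⌋ ∨ n = ⌊y⌋ + 1 := by
  obtain ⟨h₁, h₂⟩ := abs_lt.mp h
  have : ⌊y⌋ ≤ n := Int.floor_le_iff.mpr (by linarith)
  have : n - 1 ≤ ⌊y⌋ := Int.le_floor.mpr (by push_cast; linarith)
  omega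

theorem expansions_subset_biUnion {x : ℚ} (hx : x ≠ 0) :
    expansions x ⊆ ⋃ n ∈ ({⌊x⁻¹⌋, ⌊x⁻¹⌋ + 1} : Set ℤ), List.cons n '' expansions (x⁻¹ - n) := by
  rintro (_ | ⟨n, L⟩) hL
  · exact absurd hL.2.symm hx
  · obtain ⟨-, hL⟩ := cons_mem_expansions_iff.mp hL
    have hn : |x⁻¹ - n| < 1 := hL.2 ▸ abs_cf_lt_one hL.1
    exact Set.mem_biUnion (eq_floor_or_eq_floor_add_one_of_abs_sub_lt_one hn) ⟨L, hL, rfl⟩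

theorem den_inv_sub_intCast_lt {x : ℚ} (hx0 : x ≠ 0) (hx : |x| < 1) (n : ℤ) :
    (x⁻¹ - n).den < x.den := by
  have h₁ : x.num < x.den := Rat.num_lt_denom_iff.mpr (abs_lt.mp hx).2
  have h₂ : (-x).num < (-x).den := Rat.num_lt_denom_iff.mpr (by linarith [(abs_lt.mp hx).1])
  rw [Rat.num_neg_eq_neg_num, Rat.den_neg_eq_den] at h₂
  rw [Rat.sub_intCast_den, Rat.den_inv_of_ne_zero hx0]
  omega

theorem finite_expansions (x : ℚ) : (expansions x).Finite := by
  rcases eq_or_ne x 0 with rfl | hx0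
  · simp [expansions_zero]
  rcases le_or_gt 1 |x| with hx | hx
  · simp [expansions_eq_empty hx]
  refine Set.Finite.subset ?_ (expansions_subset_biUnion hx0)
  exact (Set.toFinite _).biUnion fun n _ => (finite_expansions (x⁻¹ - n)).image _
termination_by x.den
decreasing_by exact den_inv_sub_intCast_lt hx0 hx n

theorem weightSum_zero : weightSum 0 = 1 := by
  simp [weightSum, expansions_zero, weightProd]

theorem weightSum_eq_zero {x : ℚ} (hx : 1 ≤ |x|) : weightSum x = 0 := by
  simp [weightSum, expansions_eq_empty hx]

theorem weightSum_neg (x : ℚ) : weightSum (-x) = weightSum x := by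
  rw [weightSum, expansions_neg, finsum_mem_image (List.map_injective_iff.mpr neg_injective).injOn]
  simp [weightSum, weightProd, Function.comp_def]

theorem finsum_mem_expansions_inter_head (x : ℚ) {n : ℤ} (hn : n ≠ 0) :
    ∑ᶠ L ∈ expansions x ∩ {L | L.head? = some n}, weightProd L =
      (|n| - 1) * weightSum (x⁻¹ - n) := by
  have himage : expansions x ∩ {L | L.head? = some n} =
      List.cons n '' {L | n :: L ∈ expansions x} := by
    ext (_ | ⟨m, L⟩)
    · simp
    · simp only [Set.mem_inter_iff, Set.mem_ofPred_eq, List.head?_cons, Option.some.injEq,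
        Set.mem_image, List.cons.injEq]
      constructor
      · rintro ⟨hL, rfl⟩
        exact ⟨L, hL, rfl, rfl⟩
      · rintro ⟨L, hL, rfl, rfl⟩
        exact ⟨hL, rfl⟩
  rcases (show |n| = 1 ∨ 2 ≤ |n| by have := abs_pos.mpr hn; omega) with h₁ | h₂
  · have : {L | n :: L ∈ expansions x} = ∅ := by
      ext L; simp [cons_mem_expansions_iff, h₁]
    simp [himage, this, h₁]
  · have : {L | n :: L ∈ expansions x} = expansions (x⁻¹ - n) := by
      ext L; simp [cons_mem_expansions_iff, h₂]
    rw [himage, this, finsum_mem_image List.cons_injective.injOn, weightSum, mul_finsum_mem]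
    simp [weightProd]

theorem weightSum_inv_intCast_add {q : ℤ} {f : ℚ} (hq : 1 ≤ q) (hf0 : 0 ≤ f) (hf1 : f < 1) :
    weightSum (q + f)⁻¹ = (q - 1) * weightSum f + q * weightSum (f - 1) := by
  set x : ℚ := (q + f)⁻¹
  have hx0 : x ≠ 0 := inv_ne_zero (by positivity)
  have hfloor : ⌊x⁻¹⌋ = q := by
    rw [inv_inv, Int.floor_intCast_add, Int.floor_eq_zero_iff.mpr ⟨hf0, hf1⟩, add_zero]
  have hheads : expansions x ⊆ {L | L.head? = some q} ∪ {L | L.head? = some (q + 1)} := by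
    intro L hL
    obtain ⟨n, hn, L', -, rfl⟩ := Set.mem_iUnion₂.mp (expansions_subset_biUnion hx0 hL)
    rw [hfloor] at hn
    rcases hn with rfl | rfl <;> simp
  have hsplit : expansions x = expansions x ∩ {L | L.head? = some q} ∪
      expansions x ∩ {L | L.head? = some (q + 1)} := by
    rw [← Set.inter_union_distrib_left, Set.inter_eq_left.mpr hheads]
  have hdisj : Disjoint (expansions x ∩ {L | L.head? = some q})
      (expansions x ∩ {L | L.head? = some (q + 1)}) :=
    Set.disjoint_left.mpr fun L h₁ h₂ => by
      have := h₁.2.symm.trans h₂.2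
      simp at this
  rw [weightSum, hsplit, finsum_mem_union hdisj ((finite_expansions x).subset Set.inter_subset_left)
    ((finite_expansions x).subset Set.inter_subset_left),
    finsum_mem_expansions_inter_head x (by omega), finsum_mem_expansions_inter_head x (by omega),
    inv_inv, abs_of_pos (by omega), abs_of_pos (by omega)]
  push_cast
  ring_nf

theorem weightSum_one_sub_inv_add_one {y : ℚ} (hy : 1 ≤ y) :
    weightSum (1 - (y + 1)⁻¹) = weightSum (1 - y⁻¹) := by
  rcases hy.eq_or_lt with rfl | hy
  · have h := weightSum_inv_intCast_add (q := 2) (by norm_num) le_rfl one_pos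
    norm_num [weightSum_zero, weightSum_eq_zero] at h ⊢
    exact h
  · have h := weightSum_inv_intCast_add (q := 1) le_rfl (inv_nonneg.mpr (by linarith))
      (inv_lt_one_of_one_lt₀ hy)
    have hy0 : y ≠ 0 := by positivity
    rw [show 1 - (y + 1)⁻¹ = (((1 : ℤ) : ℚ) + y⁻¹)⁻¹ by field_simp; ring, h,
      ← weightSum_neg (1 - y⁻¹), neg_sub]
    ring

theorem weightSum_one_sub_inv_add_natCast {y : ℚ} (hy : 1 ≤ y) (n : ℕ) :
    weightSum (1 - (y + n)⁻¹) = weightSum (1 - y⁻¹) := by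
  induction n with
  | zero => simp
  | succ n ih =>
    rw [Nat.cast_succ, ← add_assoc,
      weightSum_one_sub_inv_add_one (le_add_of_le_of_nonneg hy n.cast_nonneg), ih]

theorem weightSum_one_sub_inv_one_add {f : ℚ} (hf0 : 0 < f) (hf1 : f < 1) :
    weightSum (1 - (1 + f)⁻¹) =
      weightSum f + (weightSum (Int.fract f⁻¹) + weightSum (Int.fract f⁻¹ - 1)) := by
  have hp : 1 ≤ ⌊f⁻¹⌋ := Int.le_floor.mpr (by simpa using (one_le_inv₀ hf0).mpr hf1.le)
  have h₁ : 1 - (1 + f)⁻¹ = (((⌊f⁻¹⌋ + 1 : ℤ) : ℚ) + Int.fract f⁻¹)⁻¹ := by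
    rw [Int.cast_add, Int.cast_one, add_right_comm, Int.floor_add_fract]
    field_simp
    ring
  have h₂ : f = ((⌊f⁻¹⌋ : ℚ) + Int.fract f⁻¹)⁻¹ := by rw [Int.floor_add_fract, inv_inv]
  have hf := weightSum_inv_intCast_add hp (Int.fract_nonneg f⁻¹) (Int.fract_lt_one _)
  rw [← h₂] at hf
  rw [h₁, weightSum_inv_intCast_add (by omega) (Int.fract_nonneg _) (Int.fract_lt_one _), hf]
  ring

theorem Rat.num_intFract (y : ℚ) : (Int.fract y).num = y.num - ⌊y⌋ * y.den := by
  have h := Rat.mul_den_eq_num (Int.fract y)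
  rw [Rat.den_intFract, Int.fract, sub_mul, Rat.mul_den_eq_num] at h
  exact_mod_cast h.symm

theorem den_fract_inv_lt {x : ℚ} (hx0 : 0 < x) (hx1 : x < 1) : (Int.fract x⁻¹).den < x.den :=
  den_inv_sub_intCast_lt hx0.ne' (abs_lt.mpr ⟨by linarith, hx1⟩) _

theorem weightSum_add_weightSum_sub_one {x : ℚ} (hx0 : 0 ≤ x) (hx1 : x < 1) :
    weightSum x + weightSum (x - 1) = x.den := by
  rcases hx0.eq_or_lt with rfl | hx0
  · simp [weightSum_zero, weightSum_eq_zero]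
  set q := ⌊x⁻¹⌋
  set f := Int.fract x⁻¹
  have hq : 1 ≤ q := Int.le_floor.mpr (by simpa using (one_le_inv₀ hx0).mpr hx1.le)
  have hf0 : 0 ≤ f := Int.fract_nonneg _
  have hx : x = (q + f)⁻¹ := by rw [Int.floor_add_fract, inv_inv]
  have hden : (x.den : ℤ) = q * f.den + f.num := by
    rw [Rat.num_intFract, Rat.den_intFract, Rat.num_inv,
      Int.sign_eq_one_of_pos (Rat.num_pos.mpr hx0)]
    ring
  have htail : weightSum (x - 1) = weightSum (1 - (1 + f)⁻¹) := by
    rw [← weightSum_neg, neg_sub, ← weightSum_one_sub_inv_add_natCast (by linarith) (q - 1).toNat]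
    have hcast : ((q - 1).toNat : ℚ) = q - 1 := by exact_mod_cast Int.toNat_of_nonneg (by omega)
    rw [hcast, hx]
    ring_nf
  have hshift : weightSum (1 - (1 + f)⁻¹) = weightSum f + f.num := by
    rcases hf0.eq_or_lt with hf | hf
    · simp [← hf]
    · rw [weightSum_one_sub_inv_one_add hf (Int.fract_lt_one _),
        weightSum_add_weightSum_sub_one (Int.fract_nonneg _) (Int.fract_lt_one _),
        Rat.den_intFract, Rat.den_inv_of_ne_zero hf.ne', Int.natCast_natAbs,
        abs_of_pos (Rat.num_pos.mpr hf)]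
  have hf := weightSum_add_weightSum_sub_one hf0 (Int.fract_lt_one x⁻¹)
  rw [hden, htail, hshift, hx, weightSum_inv_intCast_add hq hf0 (Int.fract_lt_one _)]
  linear_combination (q : ℤ) * hf
termination_by x.den
decreasing_by
  · exact (den_fract_inv_lt hf (Int.fract_lt_one _)).trans (den_fract_inv_lt hx0 hx1)
  · exact den_fract_inv_lt hx0 hx1

theorem Sset_eq_union {α : ℤ} (hα : α ≠ 0) (β : ℤ) :
    Sset α β = expansions (β / α) ∪ expansions (β / α - 1) := by
  have : ((β : ℚ) - α) / α = β / α - 1 := by field_simp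
  ext L
  simp only [Sset, expansions, this, Set.mem_union, Set.mem_ofPred_eq, and_or_left]

theorem Ldegree_two_bridge_general (α β : ℤ)
    (hβ0 : 0 < β) (hβα : β < α) (hcop : IsCoprime α β) :
    (Sset α β).Finite ∧
    (∑ᶠ L ∈ Sset α β, weightProd L) = α ∧
    (∀ n₀ ∈ Sset α β, (∀ n ∈ n₀, Even n) →
      totalSeminorm α β n₀ 1 0 = ((α : ℚ) - 1) / 2) := by
  have hα : 0 < α := hβ0.trans hβα
  have hx0 : (0 : ℚ) ≤ β / α := by positivity
  have hx1 : (β : ℚ) / α < 1 := (div_lt_one (by exact_mod_cast hα)).mpr (by exact_mod_cast hβα)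
  have hS := Sset_eq_union hα.ne' β
  have hfin : (Sset α β).Finite := hS ▸ (finite_expansions _).union (finite_expansions _)
  have hsum : ∑ᶠ L ∈ Sset α β, weightProd L = α := by
    rw [hS, finsum_mem_union (disjoint_expansions (sub_one_lt _).ne') (finite_expansions _)
      (finite_expansions _), ← weightSum, ← weightSum, weightSum_add_weightSum_sub_one hx0 hx1,
      Rat.den_div_eq_of_coprime hα (Int.isCoprime_iff_gcd_eq_one.mp hcop.symm)]
  refine ⟨hfin, hsum, fun n₀ _ _ => ?_⟩
  simp only [totalSeminorm, mul_zero, sub_zero, abs_one, one_mul, Int.cast_one]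
  have hcast := (Int.castAddHom ℚ).map_finsum_mem weightProd hfin
  rw [Int.coe_castAddHom, hsum] at hcast
  rw [← hcast]
  ring

/-- For `α > 1` odd and `0 < β < α` with `gcd(α,β) = 1`: the set `S` is finite,
`Σ_{n∈S} ∏_j (|n_j| − 1) = α`, and the total Culler–Shalen seminorm of the meridian
satisfies `Φ(1,0) = (α−1)/2` (the `L`-degree of the `Â`-polynomial of `K(α,β)`). -/
theorem Ldegree_two_bridge (α β : ℤ) (hα1 : 1 < α) (hαodd : Odd α)
    (hβ0 : 0 < β) (hβα : β < α) (hcop : IsCoprime α β) :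
    (Sset α β).Finite ∧
    (∑ᶠ L ∈ Sset α β, weightProd L) = α ∧
    (∀ n₀ ∈ Sset α β, (∀ n ∈ n₀, Even n) →
      totalSeminorm α β n₀ 1 0 = ((α : ℚ) - 1) / 2) :=
  Ldegree_two_bridge_general α β hβ0 hβα hcop
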